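/- For α, β ∈ ℝ define g_{α,β}(ε, z) = (ε² − 2ε√(1−2z) + 1)^{−α/2} · (1−2z)^{−β/2} on the domain 0 < ε < 1, 0 < z < 1/2, and define coefficients c_j^{(h)}(α,β) by c_0^{(0)} = 1 and c_j^{(h+1)} = −(α+2j−2)·c_{j−1}^{(h)} + (β+2h−j)·c_j^{(h)} (with c_{−1}^{(h)} = c_{h+1}^{(h)} = 0). Then for every h ∈ ℕ and every (ε, z) in the domain, the h-th partial derivative in z satisfies ∂_z^h g_{α,β}(ε, z) = Σ_{j=0}^{h} c_j^{(h)}(α,β) · ε^j · g_{α+2j, β+2h−j}(ε, z). -/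

import Mathlib

/-!
Since `1 - 2z ∈ (0, 1)`, the base `ε² − 2ε√(1−2z) + 1 = (ε − √(1−2z))² + 2z` is positive, and the
chain rule gives `∂_z g_{α,β} = −αε·g_{α+2,β+1} + β·g_{α,β+2}`. Differentiating the formula for `h`
term by term and shifting the index of the `ε`-terms produces exactly the recursion that defines
`c^{(h+1)}`, with `c_{h+1}^{(h)} = 0` absorbing the boundary term.
-/

open Real

/-- The auxiliary functions `g_{α,β}(ε,z) = (ε² − 2ε√(1−2z) + 1)^{−α/2}·(1−2z)^{−β/2}`. -/
noncomputable def gab (α β ε z : ℝ) : ℝ :=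
  (ε ^ 2 - 2 * ε * Real.sqrt (1 - 2 * z) + 1) ^ (-α / 2) * (1 - 2 * z) ^ (-β / 2)

/-- The coefficients `c_j^{(h)}(α,β)`: `c_0^{(0)} = 1`,
`c_j^{(h+1)} = −(α+2j−2)·c_{j−1}^{(h)} + (β+2h−j)·c_j^{(h)}`,
with the conventions `c_{−1}^{(h)} = 0` and `c_j^{(h)} = 0` for `j > h`. -/
noncomputable def ccoef (α β : ℝ) : ℕ → ℕ → ℝ
  | 0, j => if j = 0 then 1 else 0
  | h + 1, j =>
      (-(α + 2 * (j : ℝ) - 2)) * (if j = 0 then 0 else ccoef α β h (j - 1)) +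
        (β + 2 * (h : ℝ) - (j : ℝ)) * ccoef α β h j

open Finset Filter Topology

lemma ccoef_eq_zero_of_lt (α β : ℝ) {h j : ℕ} (hj : h < j) : ccoef α β h j = 0 := by
  induction h generalizing j with
  | zero => rw [ccoef, if_neg hj.ne']
  | succ h ih => rw [ccoef, if_neg (by omega), ih (by omega), ih (by omega)]; ring

lemma sum_ccoef_succ_mul (α β : ℝ) (h : ℕ) (T : ℕ → ℝ) :
    ∑ j ∈ range (h + 2), ccoef α β (h + 1) j * T j =
      ∑ j ∈ range (h + 1),
        ccoef α β h j * (-(α + 2 * (j : ℝ)) * T (j + 1) + (β + 2 * (h : ℝ) - j) * T j) := by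
  simp only [ccoef, add_mul, sum_add_distrib]
  rw [sum_range_succ' _ (h + 1), sum_range_succ _ (h + 1), ccoef_eq_zero_of_lt α β (lt_add_one h)]
  simp only [if_true, if_neg (Nat.succ_ne_zero _), Nat.add_sub_cancel, mul_zero, zero_mul,
    add_zero, ← sum_add_distrib]
  refine sum_congr rfl fun j _ => ?_
  push_cast
  ring

lemma sq_sub_two_mul_mul_sqrt_one_sub_add_one_pos (ε : ℝ) {z : ℝ} (hz : 0 < z) :
    0 < ε ^ 2 - 2 * ε * √(1 - 2 * z) + 1 := by
  have hs : √(1 - 2 * z) < 1 := (Real.sqrt_lt' one_pos).2 (by linarith)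
  nlinarith [sq_nonneg (ε - √(1 - 2 * z)), Real.sqrt_nonneg (1 - 2 * z)]

lemma hasDerivAt_gab (α β ε : ℝ) {z : ℝ} (hz0 : 0 < z) (hz1 : z < 1 / 2) :
    HasDerivAt (gab α β ε) (-α * ε * gab (α + 2) (β + 1) ε z + β * gab α (β + 2) ε z) z := by
  have hB0 : 0 < 1 - 2 * z := by linarith
  have hs0 : 0 < √(1 - 2 * z) := Real.sqrt_pos.2 hB0
  have hA0 := sq_sub_two_mul_mul_sqrt_one_sub_add_one_pos ε hz0
  have dB : HasDerivAt (fun z' => 1 - 2 * z') (-2) z := by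
    simpa using ((hasDerivAt_id z).const_mul 2).const_sub 1
  have dA : HasDerivAt (fun z' => ε ^ 2 - 2 * ε * √(1 - 2 * z') + 1)
      (2 * ε / √(1 - 2 * z)) z := by
    refine ((((dB.sqrt hB0.ne').const_mul (2 * ε)).const_sub (ε ^ 2)).add_const 1).congr_deriv ?_
    field_simp
  refine ((dA.rpow_const (p := -α / 2) (Or.inl hA0.ne')).fun_mul
    (dB.rpow_const (p := -β / 2) (Or.inl hB0.ne'))).congr_deriv ?_
  rw [gab, gab, show -(α + 2) / 2 = -α / 2 - 1 by ring, show -(β + 2) / 2 = -β / 2 - 1 by ring,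
    show -(β + 1) / 2 = -β / 2 - 1 / 2 by ring, Real.rpow_sub_one hA0.ne', Real.rpow_sub_one hB0.ne',
    Real.rpow_sub hB0, ← Real.sqrt_eq_rpow]
  -- every power is now `A ^ (-α/2)` or `B ^ (-β/2)` times a rational function of `ε, √B`
  generalize (ε ^ 2 - 2 * ε * √(1 - 2 * z) + 1) ^ (-α / 2) = P
  generalize (1 - 2 * z) ^ (-β / 2) = Q
  field_simp

lemma hasDerivAt_sum_ccoef_mul_gab (α β ε : ℝ) (h : ℕ) {z : ℝ} (hz0 : 0 < z) (hz1 : z < 1 / 2) :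
    HasDerivAt (fun z' => ∑ j ∈ range (h + 1),
        ccoef α β h j * ε ^ j * gab (α + 2 * (j : ℝ)) (β + 2 * (h : ℝ) - j) ε z')
      (∑ j ∈ range (h + 1 + 1),
        ccoef α β (h + 1) j * ε ^ j * gab (α + 2 * (j : ℝ)) (β + 2 * ((h + 1 : ℕ) : ℝ) - j) ε z)
      z := by
  simp_rw [mul_assoc (ccoef α β _ _)]
  rw [sum_ccoef_succ_mul]
  refine HasDerivAt.fun_sum fun j _ =>
    (((hasDerivAt_gab _ _ ε hz0 hz1).const_mul _).const_mul _).congr_deriv ?_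
  push_cast
  rw [show α + 2 * ((j : ℝ) + 1) = α + 2 * j + 2 by ring,
    show β + 2 * ((h : ℝ) + 1) - (j + 1) = β + 2 * h - j + 1 by ring,
    show β + 2 * ((h : ℝ) + 1) - j = β + 2 * h - j + 2 by ring]
  ring

theorem stmt_13_general (α β : ℝ) (h : ℕ) (ε z : ℝ)
    (hz0 : 0 < z) (hz1 : z < 1 / 2) :
    iteratedDeriv h (fun z' => gab α β ε z') z
      = ∑ j ∈ Finset.range (h + 1),
          ccoef α β h j * ε ^ j * gab (α + 2 * (j : ℝ)) (β + 2 * (h : ℝ) - (j : ℝ)) ε z := by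
  induction h generalizing z with
  | zero => simp [ccoef]
  | succ h ih =>
    have hloc : iteratedDeriv h (fun z' => gab α β ε z') =ᶠ[𝓝 z] fun z' => ∑ j ∈ range (h + 1),
        ccoef α β h j * ε ^ j * gab (α + 2 * (j : ℝ)) (β + 2 * (h : ℝ) - j) ε z' :=
      eventually_of_mem (Ioo_mem_nhds hz0 hz1) fun w hw => ih w hw.1 hw.2
    rw [iteratedDeriv_succ, hloc.deriv_eq, (hasDerivAt_sum_ccoef_mul_gab α β ε h hz0 hz1).deriv]

/-- the `h`-th `z`-derivative of `g_{α,β}` is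
`Σ_{j=0}^{h} c_j^{(h)}(α,β)·ε^j·g_{α+2j, β+2h−j}(ε,z)` on `0 < ε < 1`, `0 < z < 1/2`. -/
theorem stmt_13 (α β : ℝ) (h : ℕ) (ε z : ℝ)
    (hε0 : 0 < ε) (hε1 : ε < 1) (hz0 : 0 < z) (hz1 : z < 1 / 2) :
    iteratedDeriv h (fun z' => gab α β ε z') z
      = ∑ j ∈ Finset.range (h + 1),
          ccoef α β h j * ε ^ j * gab (α + 2 * (j : ℝ)) (β + 2 * (h : ℝ) - (j : ℝ)) ε z :=
  stmt_13_general α β h ε z hz0 hz1
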